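/- Let x₀, x₁, x₂, x₃, x₄ be points of ℝ³ with x₁ ≠ x₃, x₂ ≠ x₄ and x₁ ≠ x₄, let A : ℝ³ → ℝ³ be an invertible affine map with linear part L, and set x'_i = A x_i for i = 0,…,4. Define: ⁵q₀(t,s,r) as the Cayley–Menger determinant of (x₁,x₂,x₃,x₄) in which dist(x₁,x₃)² is replaced by t², dist(x₂,x₄)² by s², and dist(x₁,x₄)² by r²; ⁵q₁(s) as that of (x₀,x₂,x₃,x₄) with dist(x₂,x₄)² replaced by s²; ⁵q₂(t,r) as that of (x₀,x₁,x₃,x₄) with dist(x₁,x₃)² replaced by t² and dist(x₁,x₄)² by r²; ⁵q₃(s,r) as that of (x₀,x₁,x₂,x₄) with dist(x₂,x₄)² replaced by s² and dist(x₁,x₄)² by r²; ⁵q₄(t) as that of (x₀,x₁,x₂,x₃) with dist(x₁,x₃)² replaced by t²; and ⁵q(t,s,r) as the 6×6 Cayley–Menger determinant of all five points (x₀,x₁,x₂,x₃,x₄) with dist(x₁,x₃)² replaced by t², dist(x₂,x₄)² by s², and dist(x₁,x₄)² by r². Define the primed polynomials in the same way from the primed points. Then the system of seven equations ⁵q'₀(t',s',r')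 = α·⁵q₀(t,s,r), ⁵q'₁(s') = α·⁵q₁(s), ⁵q'₂(t',r') = α·⁵q₂(t,r), ⁵q'₃(s',r') = α·⁵q₃(s,r), ⁵q'₄(t') = α·⁵q₄(t), ⁵q(t,s,r) = 0, ⁵q'(t',s',r') = 0 has a solution with α > 0, t > 0, s > 0, r > 0, t' > 0, s' > 0, r' > 0; namely α = (det L)², t = dist(x₁,x₃), s = dist(x₂,x₄), r = dist(x₁,x₄), t' = dist(x'₁,x'₃), s' = dist(x'₂,x'₄), r' = dist(x'₁,x'₄). -/

import Mathlib

/-- The Cayley–Menger-type determinant built from the six prescribed squared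
distances `d01, d02, d03, d12, d13, d23` of a quadruple of points: the determinant
of the `5 × 5` matrix with `0` in the corner, `1`'s in the rest of the first row
and column, and the `d_{ij}`'s placed symmetrically. -/
noncomputable def cmQ (d01 d02 d03 d12 d13 d23 : ℝ) : ℝ :=
  Matrix.det !![0, 1, 1, 1, 1;
                1, 0, d01, d02, d03;
                1, d01, 0, d12, d13;
                1, d02, d12, 0, d23;
                1, d03, d13, d23, 0]

/-- The Cayley–Menger-type determinant built from the ten prescribed squared
distances of a quintuple of points: the determinant of the `6 × 6` matrix with
`0` in the corner, `1`'s in the rest of the first row and column, and the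
`d_{ij}`'s placed symmetrically. -/
noncomputable def cmP (d01 d02 d03 d04 d12 d13 d14 d23 d24 d34 : ℝ) : ℝ :=
  Matrix.det !![0, 1, 1, 1, 1, 1;
                1, 0, d01, d02, d03, d04;
                1, d01, 0, d12, d13, d14;
                1, d02, d12, 0, d23, d24;
                1, d03, d13, d23, 0, d34;
                1, d04, d14, d24, d34, 0]

/-- `⁵q₀(t,s,r)`: the Cayley–Menger determinant of the quadruple `(x₁,x₂,x₃,x₄)`
in which `dist(x₁,x₃)²` is replaced by `t²`, `dist(x₂,x₄)²` by `s²`, and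
`dist(x₁,x₄)²` by `r²`. -/
noncomputable def q50 (x : Fin 5 → EuclideanSpace ℝ (Fin 3)) (t s r : ℝ) : ℝ :=
  cmQ (dist (x 1) (x 2) ^ 2) (t ^ 2) (r ^ 2)
      (dist (x 2) (x 3) ^ 2) (s ^ 2) (dist (x 3) (x 4) ^ 2)

/-- `⁵q₁(s)`: the Cayley–Menger determinant of the quadruple `(x₀,x₂,x₃,x₄)`
in which `dist(x₂,x₄)²` is replaced by `s²`. -/
noncomputable def q51 (x : Fin 5 → EuclideanSpace ℝ (Fin 3)) (s : ℝ) : ℝ :=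
  cmQ (dist (x 0) (x 2) ^ 2) (dist (x 0) (x 3) ^ 2) (dist (x 0) (x 4) ^ 2)
      (dist (x 2) (x 3) ^ 2) (s ^ 2) (dist (x 3) (x 4) ^ 2)

/-- `⁵q₂(t,r)`: the Cayley–Menger determinant of the quadruple `(x₀,x₁,x₃,x₄)`
in which `dist(x₁,x₃)²` is replaced by `t²` and `dist(x₁,x₄)²` by `r²`. -/
noncomputable def q52 (x : Fin 5 → EuclideanSpace ℝ (Fin 3)) (t r : ℝ) : ℝ :=
  cmQ (dist (x 0) (x 1) ^ 2) (dist (x 0) (x 3) ^ 2) (dist (x 0) (x 4) ^ 2)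
      (t ^ 2) (r ^ 2) (dist (x 3) (x 4) ^ 2)

/-- `⁵q₃(s,r)`: the Cayley–Menger determinant of the quadruple `(x₀,x₁,x₂,x₄)`
in which `dist(x₂,x₄)²` is replaced by `s²` and `dist(x₁,x₄)²` by `r²`. -/
noncomputable def q53 (x : Fin 5 → EuclideanSpace ℝ (Fin 3)) (s r : ℝ) : ℝ :=
  cmQ (dist (x 0) (x 1) ^ 2) (dist (x 0) (x 2) ^ 2) (dist (x 0) (x 4) ^ 2)
      (dist (x 1) (x 2) ^ 2) (r ^ 2) (s ^ 2)

/-- `⁵q₄(t)`: the Cayley–Menger determinant of the quadruple `(x₀,x₁,x₂,x₃)`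
in which `dist(x₁,x₃)²` is replaced by `t²`. -/
noncomputable def q54 (x : Fin 5 → EuclideanSpace ℝ (Fin 3)) (t : ℝ) : ℝ :=
  cmQ (dist (x 0) (x 1) ^ 2) (dist (x 0) (x 2) ^ 2) (dist (x 0) (x 3) ^ 2)
      (dist (x 1) (x 2) ^ 2) (t ^ 2) (dist (x 2) (x 3) ^ 2)

/-- `⁵q(t,s,r)`: the `6 × 6` Cayley–Menger determinant of all five points
`(x₀,x₁,x₂,x₃,x₄)` in which `dist(x₁,x₃)²` is replaced by `t²`, `dist(x₂,x₄)²`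
by `s²`, and `dist(x₁,x₄)²` by `r²`. -/
noncomputable def q5full (x : Fin 5 → EuclideanSpace ℝ (Fin 3)) (t s r : ℝ) : ℝ :=
  cmP (dist (x 0) (x 1) ^ 2) (dist (x 0) (x 2) ^ 2) (dist (x 0) (x 3) ^ 2)
      (dist (x 0) (x 4) ^ 2) (dist (x 1) (x 2) ^ 2) (t ^ 2) (r ^ 2)
      (dist (x 2) (x 3) ^ 2) (s ^ 2) (dist (x 3) (x 4) ^ 2)

/-!
The Cayley–Menger determinant of points `p₀, …, pₙ` is `(-1)ⁿ⁺¹ 2ⁿ` times the Gram determinant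
of the edge vectors `uᵢ = pᵢ -ᵥ p₀`, because `dist pᵢ pⱼ ^ 2 = ‖uᵢ‖² + ‖uⱼ‖² - 2 ⟪uᵢ, uⱼ⟫`.
Four edge vectors in `ℝ³` are linearly dependent, so `⁵q` vanishes at the true diagonals.
Three edge vectors have Gram determinant `(det [u₁ u₂ u₃])²`, and an affine map multiplies
`det [u₁ u₂ u₃]` by `det L`, so each `⁵q'ⱼ` is `(det L)² · ⁵qⱼ` at the true distances.
These are positive since the vertices involved are distinct and `A` is injective.
-/

open Matrix Module

theorem cmQ_eq_eight_mul_det (a b c d e f : ℝ) :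
    cmQ a b c (a + b - 2 * d) (a + c - 2 * e) (b + c - 2 * f)
      = 8 * !![a, d, e; d, b, f; e, f, c].det := by
  simp [cmQ, det_succ_row_zero, Fin.sum_univ_succ, Fin.succAbove]
  ring

theorem cmP_eq_neg_sixteen_mul_det (a b c g d e f h i j : ℝ) :
    cmP a b c g (a + b - 2 * d) (a + c - 2 * e) (a + g - 2 * f) (b + c - 2 * h)
        (b + g - 2 * i) (c + g - 2 * j)
      = -16 * !![a, d, e, f; d, b, h, i; e, h, c, j; f, i, j, g].det := by
  simp [cmP, det_succ_row_zero, Fin.sum_univ_succ, Fin.succAbove]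
  ring

section Gram

variable {V : Type*} [NormedAddCommGroup V] [InnerProductSpace ℝ V]
  {ι : Type*} [Fintype ι] [DecidableEq ι]

theorem det_gram_eq_zero_of_finrank_lt [FiniteDimensional ℝ V] (v : ι → V)
    (h : finrank ℝ V < Fintype.card ι) : (gram ℝ v).det = 0 := by
  by_contra hne
  exact h.not_ge (det_gram_ne_zero_iff_linearIndependent.mp hne).fintype_card_le_finrank

theorem OrthonormalBasis.det_gram_eq_det_sq (b : OrthonormalBasis ι ℝ V) (v : ι → V) :
    (gram ℝ v).det = b.toBasis.det v ^ 2 := by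
  have hrepr : (of fun i j ↦ b.repr (v j) i) = b.toBasis.toMatrix v := by
    ext i j
    simp [Basis.toMatrix_apply]
  rw [gram_eq_conjTranspose_mul b, det_mul, det_conjTranspose, Basis.det_apply, sq, hrepr,
    star_trivial]

theorem det_gram_comp [FiniteDimensional ℝ V] (f : V →ₗ[ℝ] V) (v : ι → V)
    (h : finrank ℝ V = Fintype.card ι) :
    (gram ℝ (f ∘ v)).det = LinearMap.det f ^ 2 * (gram ℝ v).det := by
  let b := (stdOrthonormalBasis ℝ V).reindex (Fintype.equivFinOfCardEq h.symm).symm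
  rw [b.det_gram_eq_det_sq, b.det_gram_eq_det_sq, Basis.det_comp, mul_pow]

end Gram

theorem dist_eq_norm_vsub_sub_vsub {V P : Type*} [SeminormedAddCommGroup V]
    [PseudoMetricSpace P] [NormedAddTorsor V P] (p q o : P) :
    dist p q = ‖(p -ᵥ o) - (q -ᵥ o)‖ := by
  rw [← dist_vsub_cancel_right p q o, dist_eq_norm]

section CayleyMenger

variable {V P : Type*} [NormedAddCommGroup V] [InnerProductSpace ℝ V]
  [MetricSpace P] [NormedAddTorsor V P]

theorem norm_sub_sq_eq_add_sub_inner (u v : V) :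
    ‖u - v‖ ^ 2 = ‖u‖ ^ 2 + ‖v‖ ^ 2 - 2 * inner ℝ u v := by
  rw [norm_sub_sq_real]
  ring

theorem cmQ_norm_sub_eq_det_gram (u v w : V) :
    cmQ (‖u‖ ^ 2) (‖v‖ ^ 2) (‖w‖ ^ 2) (‖u - v‖ ^ 2) (‖u - w‖ ^ 2) (‖v - w‖ ^ 2)
      = 8 * (gram ℝ ![u, v, w]).det := by
  simp only [norm_sub_sq_eq_add_sub_inner]
  rw [cmQ_eq_eight_mul_det]
  congr 2
  ext i j
  fin_cases i <;> fin_cases j <;> simp [gram_apply, real_inner_comm]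

theorem cmP_norm_sub_eq_det_gram (u v w z : V) :
    cmP (‖u‖ ^ 2) (‖v‖ ^ 2) (‖w‖ ^ 2) (‖z‖ ^ 2) (‖u - v‖ ^ 2) (‖u - w‖ ^ 2) (‖u - z‖ ^ 2)
        (‖v - w‖ ^ 2) (‖v - z‖ ^ 2) (‖w - z‖ ^ 2)
      = -16 * (gram ℝ ![u, v, w, z]).det := by
  simp only [norm_sub_sq_eq_add_sub_inner]
  rw [cmP_eq_neg_sixteen_mul_det]
  congr 2
  ext i j
  fin_cases i <;> fin_cases j <;> simp [gram_apply, real_inner_comm]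

theorem cmQ_dist_eq_det_gram (p₀ p₁ p₂ p₃ : P) :
    cmQ (dist p₀ p₁ ^ 2) (dist p₀ p₂ ^ 2) (dist p₀ p₃ ^ 2)
        (dist p₁ p₂ ^ 2) (dist p₁ p₃ ^ 2) (dist p₂ p₃ ^ 2)
      = 8 * (gram ℝ ![p₁ -ᵥ p₀, p₂ -ᵥ p₀, p₃ -ᵥ p₀]).det := by
  simp only [dist_eq_norm_vsub' V p₀]
  simp only [dist_eq_norm_vsub_sub_vsub _ _ p₀]
  exact cmQ_norm_sub_eq_det_gram _ _ _

theorem cmP_dist_eq_det_gram (p₀ p₁ p₂ p₃ p₄ : P) :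
    cmP (dist p₀ p₁ ^ 2) (dist p₀ p₂ ^ 2) (dist p₀ p₃ ^ 2) (dist p₀ p₄ ^ 2)
        (dist p₁ p₂ ^ 2) (dist p₁ p₃ ^ 2) (dist p₁ p₄ ^ 2)
        (dist p₂ p₃ ^ 2) (dist p₂ p₄ ^ 2) (dist p₃ p₄ ^ 2)
      = -16 * (gram ℝ ![p₁ -ᵥ p₀, p₂ -ᵥ p₀, p₃ -ᵥ p₀, p₄ -ᵥ p₀]).det := by
  simp only [dist_eq_norm_vsub' V p₀]
  simp only [dist_eq_norm_vsub_sub_vsub _ _ p₀]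
  exact cmP_norm_sub_eq_det_gram _ _ _ _

variable [FiniteDimensional ℝ V]

theorem cmP_dist_eq_zero_of_finrank_lt (hV : finrank ℝ V < 4) (p₀ p₁ p₂ p₃ p₄ : P) :
    cmP (dist p₀ p₁ ^ 2) (dist p₀ p₂ ^ 2) (dist p₀ p₃ ^ 2) (dist p₀ p₄ ^ 2)
        (dist p₁ p₂ ^ 2) (dist p₁ p₃ ^ 2) (dist p₁ p₄ ^ 2)
        (dist p₂ p₃ ^ 2) (dist p₂ p₄ ^ 2) (dist p₃ p₄ ^ 2) = 0 := by
  rw [cmP_dist_eq_det_gram, det_gram_eq_zero_of_finrank_lt _ (by simpa using hV), mul_zero]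

theorem cmQ_dist_map_eq_det_sq_mul (hV : finrank ℝ V = 3) (A : P →ᵃ[ℝ] P) (p₀ p₁ p₂ p₃ : P) :
    cmQ (dist (A p₀) (A p₁) ^ 2) (dist (A p₀) (A p₂) ^ 2) (dist (A p₀) (A p₃) ^ 2)
        (dist (A p₁) (A p₂) ^ 2) (dist (A p₁) (A p₃) ^ 2) (dist (A p₂) (A p₃) ^ 2)
      = LinearMap.det A.linear ^ 2 *
        cmQ (dist p₀ p₁ ^ 2) (dist p₀ p₂ ^ 2) (dist p₀ p₃ ^ 2)
          (dist p₁ p₂ ^ 2) (dist p₁ p₃ ^ 2) (dist p₂ p₃ ^ 2) := by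
  have hvsub : ![A p₁ -ᵥ A p₀, A p₂ -ᵥ A p₀, A p₃ -ᵥ A p₀]
      = A.linear ∘ ![p₁ -ᵥ p₀, p₂ -ᵥ p₀, p₃ -ᵥ p₀] := by
    ext1 i
    fin_cases i <;> simp [AffineMap.linearMap_vsub]
  rw [cmQ_dist_eq_det_gram, cmQ_dist_eq_det_gram, hvsub, det_gram_comp _ _ (by simpa using hV)]
  ring

end CayleyMenger

/-- Lemma 3 of the paper: if `x₀,…,x₄ ∈ ℝ³` (with `x₁ ≠ x₃`,
`x₂ ≠ x₄`, `x₁ ≠ x₄`) are carried by an invertible affine map `A` with linear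
part `L` to `x'₀,…,x'₄`, then the seven-equation system
`⁵q'_j = α · ⁵q_j` (`j = 0,…,4`), `⁵q(t,s,r) = 0`, `⁵q'(t',s',r') = 0` has an
all-positive solution, namely `α = (det L)²`, `t = dist(x₁,x₃)`,
`s = dist(x₂,x₄)`, `r = dist(x₁,x₄)`, `t' = dist(x'₁,x'₃)`, `s' = dist(x'₂,x'₄)`,
`r' = dist(x'₁,x'₄)`. -/
theorem valency_five_system_has_positive_solution
    (x : Fin 5 → EuclideanSpace ℝ (Fin 3))
    (h13 : x 1 ≠ x 3) (h24 : x 2 ≠ x 4) (h14 : x 1 ≠ x 4)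
    (A : EuclideanSpace ℝ (Fin 3) →ᵃ[ℝ] EuclideanSpace ℝ (Fin 3))
    (hA : Function.Bijective A)
    (x' : Fin 5 → EuclideanSpace ℝ (Fin 3)) (hx' : ∀ i, x' i = A (x i)) :
    0 < (LinearMap.det A.linear) ^ 2 ∧
      0 < dist (x 1) (x 3) ∧ 0 < dist (x 2) (x 4) ∧ 0 < dist (x 1) (x 4) ∧
      0 < dist (x' 1) (x' 3) ∧ 0 < dist (x' 2) (x' 4) ∧ 0 < dist (x' 1) (x' 4) ∧
      q50 x' (dist (x' 1) (x' 3)) (dist (x' 2) (x' 4)) (dist (x' 1) (x' 4)) =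
        (LinearMap.det A.linear) ^ 2 *
          q50 x (dist (x 1) (x 3)) (dist (x 2) (x 4)) (dist (x 1) (x 4)) ∧
      q51 x' (dist (x' 2) (x' 4)) =
        (LinearMap.det A.linear) ^ 2 * q51 x (dist (x 2) (x 4)) ∧
      q52 x' (dist (x' 1) (x' 3)) (dist (x' 1) (x' 4)) =
        (LinearMap.det A.linear) ^ 2 * q52 x (dist (x 1) (x 3)) (dist (x 1) (x 4)) ∧
      q53 x' (dist (x' 2) (x' 4)) (dist (x' 1) (x' 4)) =
        (LinearMap.det A.linear) ^ 2 * q53 x (dist (x 2) (x 4)) (dist (x 1) (x 4)) ∧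
      q54 x' (dist (x' 1) (x' 3)) =
        (LinearMap.det A.linear) ^ 2 * q54 x (dist (x 1) (x 3)) ∧
      q5full x (dist (x 1) (x 3)) (dist (x 2) (x 4)) (dist (x 1) (x 4)) = 0 ∧
      q5full x' (dist (x' 1) (x' 3)) (dist (x' 2) (x' 4)) (dist (x' 1) (x' 4)) = 0 := by
  obtain rfl : x' = fun i ↦ A (x i) := funext hx'
  have hV : finrank ℝ (EuclideanSpace ℝ (Fin 3)) = 3 := finrank_euclideanSpace_fin
  have hdet : LinearMap.det A.linear ≠ 0 :=
    (LinearEquiv.ofBijective A.linear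
      ((AffineMap.linear_bijective_iff A).mpr hA)).isUnit_det'.ne_zero
  have hdist {i j : Fin 5} (h : x i ≠ x j) : 0 < dist (A (x i)) (A (x j)) :=
    dist_pos.mpr (hA.injective.ne h)
  have hq := cmQ_dist_map_eq_det_sq_mul hV A
  have hp := cmP_dist_eq_zero_of_finrank_lt (P := EuclideanSpace ℝ (Fin 3)) (by omega)
  exact ⟨pow_two_pos_of_ne_zero hdet, dist_pos.mpr h13, dist_pos.mpr h24, dist_pos.mpr h14,
    hdist h13, hdist h24, hdist h14, hq _ _ _ _, hq _ _ _ _, hq _ _ _ _, hq _ _ _ _, hq _ _ _ _,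
    hp _ _ _ _ _, hp _ _ _ _ _⟩
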